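/- Under Assumptions (A1)–(A4), fix a noise path Z with Hölder constant Λ, let Y be the corresponding pathwise solution and, for each N with c3·Δ_N < 1, let Ŷ_N be the corresponding drift-implicit Euler scheme. Then for every r ≥ 1 there exists a constant 𝒞 > 0, independent of N, such that max_{k=0,…,N} |Y(t_k) − Ŷ_N(t_k)|^r ≤ 𝒞·Δ_N^{λr} for every N with c3·Δ_N < 1. -/

import Mathlib

/-!
On the compact interval `[0, T]` the solution stays a distance `ε > 0` above the barrier `φ`,
where the drift is Lipschitz; as `Y` is `λ`-Hölder, so is `t ↦ b(t, Y t)`, and the exact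
solution satisfies the implicit Euler step up to a local error `O(Δ^(1+λ))`. The one-sided
Lipschitz bound `∂b/∂y < c₃` makes the implicit step stable: the error is amplified by at most
`(1 - c₃Δ)⁻¹` per step. Since `c₃Δ < 1` forces `N > c₃T`, `c₃Δ` stays below some `x₀ < 1`
uniformly in `N`, so `(1 - c₃Δ)⁻ᴺ ≤ exp (c₃T / (1 - x₀))`, and summing `N` local errors gives
the global bound `O(Δ^λ)`.
-/

open MeasureTheory Set Filter Topology Real

lemma continuousOn_of_abs_sub_le_mul_rpow {f : ℝ → ℝ} {s : Set ℝ} {K α : ℝ} (hα : 0 < α)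
    (hf : ∀ x ∈ s, ∀ y ∈ s, |f y - f x| ≤ K * |y - x| ^ α) : ContinuousOn f s := by
  intro x hx
  rw [ContinuousWithinAt, tendsto_iff_dist_tendsto_zero]
  have hlim : Tendsto (fun y : ℝ => K * |y - x| ^ α) (𝓝[s] x) (𝓝 0) := by
    have hcont : Continuous fun y : ℝ => K * |y - x| ^ α := by fun_prop (disch := exact hα.le)
    simpa [Real.zero_rpow hα.ne'] using (hcont.tendsto x).mono_left nhdsWithin_le_nhds
  exact squeeze_zero' (Eventually.of_forall fun _ => dist_nonneg)
    (eventually_mem_nhdsWithin.mono fun y hy => (Real.dist_eq _ _).trans_le (hf x hx y hy)) hlim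

lemma sub_eq_integral_add_sub {Y g Z : ℝ → ℝ} {T y0 s t : ℝ} (hg : ContinuousOn g (Icc 0 T))
    (hY : ∀ t ∈ Icc 0 T, Y t = y0 + (∫ u in (0:ℝ)..t, g u) + Z t)
    (hs : s ∈ Icc 0 T) (ht : t ∈ Icc 0 T) :
    Y t - Y s = (∫ u in s..t, g u) + (Z t - Z s) := by
  have h0 : (0:ℝ) ∈ Icc 0 T := left_mem_Icc.2 (hs.1.trans hs.2)
  have hint : ∀ a ∈ Icc 0 T, ∀ c ∈ Icc 0 T, IntervalIntegrable g volume a c :=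
    fun a ha c hc => (hg.mono (uIcc_subset_Icc ha hc)).intervalIntegrable
  rw [hY s hs, hY t ht, ← intervalIntegral.integral_add_adjacent_intervals (hint 0 h0 s hs)
    (hint s hs t ht)]
  ring

lemma abs_sub_le_of_eq_integral_add {Y g Z : ℝ → ℝ} {T lam B Lam : ℝ} (hlam : lam ≤ 1)
    (hg : ∀ s ∈ Icc 0 T, |g s| ≤ B)
    (hZ : ∀ s ∈ Icc 0 T, ∀ t ∈ Icc 0 T, |Z t - Z s| ≤ Lam * |t - s| ^ lam)
    (hY : ∀ s ∈ Icc 0 T, ∀ t ∈ Icc 0 T, Y t - Y s = (∫ u in s..t, g u) + (Z t - Z s))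
    {s t : ℝ} (hs : s ∈ Icc 0 T) (ht : t ∈ Icc 0 T) :
    |Y t - Y s| ≤ (B * T ^ (1 - lam) + Lam) * |t - s| ^ lam := by
  have hB : 0 ≤ B := (abs_nonneg _).trans (hg s hs)
  have hts : |t - s| ≤ T := abs_sub_le_iff.2 ⟨by linarith [hs.1, ht.2], by linarith [hs.2, ht.1]⟩
  have hint : |∫ u in s..t, g u| ≤ B * |t - s| :=
    intervalIntegral.norm_integral_le_of_norm_le_const (f := g)
      fun u hu => hg u (uIcc_subset_Icc hs ht (uIoc_subset_uIcc hu))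
  have hpow : |t - s| ≤ T ^ (1 - lam) * |t - s| ^ lam := by
    calc |t - s| = |t - s| ^ (1 - lam) * |t - s| ^ lam := by
          rw [← rpow_add' (abs_nonneg _) (by norm_num), sub_add_cancel, rpow_one]
      _ ≤ T ^ (1 - lam) * |t - s| ^ lam := by gcongr
  calc |Y t - Y s| ≤ |∫ u in s..t, g u| + |Z t - Z s| := hY s hs t ht ▸ abs_add_le _ _
    _ ≤ B * (T ^ (1 - lam) * |t - s| ^ lam) + Lam * |t - s| ^ lam :=
      add_le_add (hint.trans (mul_le_mul_of_nonneg_left hpow hB)) (hZ s hs t ht)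
    _ = (B * T ^ (1 - lam) + Lam) * |t - s| ^ lam := by ring

lemma abs_integral_sub_mul_le {g : ℝ → ℝ} {a b L : ℝ} (hab : a ≤ b)
    (hg : IntervalIntegrable g volume a b) (hL : ∀ u ∈ Icc a b, |g u - g b| ≤ L) :
    |(∫ u in a..b, g u) - g b * (b - a)| ≤ L * (b - a) := by
  have hsub : (∫ u in a..b, g u) - g b * (b - a) = ∫ u in a..b, (g u - g b) := by
    rw [intervalIntegral.integral_sub hg intervalIntegrable_const, intervalIntegral.integral_const,
      smul_eq_mul, mul_comm]
  rw [hsub, ← abs_of_nonneg (sub_nonneg.2 hab)]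
  exact intervalIntegral.norm_integral_le_of_norm_le_const (f := fun u => g u - g b)
    fun u hu => hL u (Ioc_subset_Icc_self (uIoc_of_le hab ▸ hu))

lemma sub_mul_sub_le_mul_sq_of_hasDerivAt {f f' : ℝ → ℝ} {a c : ℝ}
    (hf : ∀ y, a < y → HasDerivAt f (f' y) y) (hf' : ∀ y, a < y → f' y ≤ c)
    {y₁ y₂ : ℝ} (h₁ : a < y₁) (h₂ : a < y₂) :
    (f y₁ - f y₂) * (y₁ - y₂) ≤ c * (y₁ - y₂) ^ 2 := by
  have hderiv : ∀ y, a < y → HasDerivAt (fun y => c * y - f y) (c - f' y) y := fun y hy => by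
    have h := ((hasDerivAt_id y).const_mul c).sub (hf y hy)
    rw [mul_one] at h
    exact h
  have hmono : MonotoneOn (fun y => c * y - f y) (Ioi a) := by
    refine monotoneOn_of_hasDerivWithinAt_nonneg (f' := fun y => c - f' y) (convex_Ioi a)
      (fun y hy => (hderiv y hy).continuousAt.continuousWithinAt) ?_ ?_ <;> rw [interior_Ioi]
    · exact fun y hy => (hderiv y hy).hasDerivWithinAt
    · exact fun y hy => sub_nonneg.2 (hf' y hy)
  rcases le_total y₁ y₂ with h | h
  · nlinarith [hmono h₁ h₂ h]
  · nlinarith [hmono h₂ h₁ h]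

lemma abs_le_div_of_eq_add_mul {c D e e' R d : ℝ} (hD : 0 ≤ D) (hcD : c * D < 1)
    (heq : e' = e + R + d * D) (hosl : d * e' ≤ c * e' ^ 2) :
    |e'| ≤ (|e| + |R|) / (1 - c * D) := by
  rw [le_div_iff₀ (sub_pos.2 hcD)]
  have hsplit : (1 - c * D) * e' ^ 2 = (e + R) * e' + (d * e' - c * e' ^ 2) * D := by
    linear_combination e' * heq
  have hlin : (e + R) * e' ≤ (|e| + |R|) * |e'| := by
    calc (e + R) * e' ≤ |e + R| * |e'| := by rw [← abs_mul]; exact le_abs_self _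
      _ ≤ (|e| + |R|) * |e'| := by gcongr; exact abs_add_le _ _
  have hsq : |e'| * (1 - c * D) * |e'| ≤ (|e| + |R|) * |e'| := by
    nlinarith [sq_abs e', mul_le_mul_of_nonneg_right (sub_nonpos.2 hosl) hD]
  rcases (abs_nonneg e').eq_or_lt with h | h
  · rw [← h, zero_mul]; positivity
  · exact le_of_mul_le_mul_right hsq h

lemma abs_sub_le_of_implicit_recursion {y z w : ℕ → ℝ} {f : ℕ → ℝ → ℝ} {c D q : ℝ} {N : ℕ}
    (hc : 0 ≤ c) (hD : 0 ≤ D) (hcD : c * D < 1) (h0 : y 0 = z 0)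
    (hosl : ∀ k < N, (f k (y (k + 1)) - f k (z (k + 1))) * (y (k + 1) - z (k + 1))
      ≤ c * (y (k + 1) - z (k + 1)) ^ 2)
    (hy : ∀ k < N, |y (k + 1) - y k - f k (y (k + 1)) * D - w k| ≤ q)
    (hz : ∀ k < N, z (k + 1) = z k + f k (z (k + 1)) * D + w k) :
    ∀ k ≤ N, |y k - z k| ≤ k * q * (1 - c * D)⁻¹ ^ k := by
  have hA : 1 ≤ (1 - c * D)⁻¹ := (one_le_inv₀ (sub_pos.2 hcD)).2 (by nlinarith)
  intro k
  induction k with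
  | zero => intro _; simp [h0]
  | succ k ih =>
    intro hk
    have hq : 0 ≤ q := (abs_nonneg _).trans (hy k hk)
    calc |y (k + 1) - z (k + 1)|
        ≤ (|y k - z k| + |y (k + 1) - y k - f k (y (k + 1)) * D - w k|) / (1 - c * D) :=
          abs_le_div_of_eq_add_mul hD hcD (by linear_combination -(hz k hk)) (hosl k hk)
      _ ≤ (k * q * (1 - c * D)⁻¹ ^ k + q) * (1 - c * D)⁻¹ := by
          rw [div_eq_mul_inv]; gcongr
          exacts [ih (by omega), hy k hk]
      _ ≤ (k + 1 : ℕ) * q * (1 - c * D)⁻¹ ^ (k + 1) := by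
          have := one_le_pow₀ (n := k) hA
          push_cast
          rw [pow_succ]
          nlinarith [mul_le_mul_of_nonneg_left this (mul_nonneg hq (zero_le_one.trans hA))]

lemma inv_one_sub_pow_le_exp {x x₀ : ℝ} (n : ℕ) (hx : 0 ≤ x) (hxx₀ : x ≤ x₀) (hx₀ : x₀ < 1) :
    (1 - x)⁻¹ ^ n ≤ exp (n * x / (1 - x₀)) := by
  have hx1 : 0 < 1 - x := by linarith
  have hstep : (1 - x)⁻¹ ≤ exp (x / (1 - x₀)) := by
    calc (1 - x)⁻¹ = x / (1 - x) + 1 := by field_simp; ring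
      _ ≤ x / (1 - x₀) + 1 := by gcongr
      _ ≤ exp (x / (1 - x₀)) := add_one_le_exp _
  calc (1 - x)⁻¹ ^ n ≤ exp (x / (1 - x₀)) ^ n := by gcongr
    _ = exp (n * x / (1 - x₀)) := by rw [← exp_nat_mul, mul_div_assoc]

lemma exists_lt_one_forall_div_le {a : ℝ} (ha : 0 ≤ a) :
    ∃ x₀ < 1, ∀ N : ℕ, a / N < 1 → a / N ≤ x₀ := by
  refine ⟨a / (⌊a⌋₊ + 1), (div_lt_one (by positivity)).2 (Nat.lt_floor_add_one a), ?_⟩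
  intro N hN
  rcases N.eq_zero_or_pos with rfl | hN0
  · simp only [CharP.cast_eq_zero, div_zero]; positivity
  have hfloor : ⌊a⌋₊ < N := (Nat.floor_lt ha).2 ((div_lt_one (by positivity)).1 hN)
  gcongr
  exact_mod_cast hfloor

lemma exists_pos_abs_drift_sub_le {T lam K c1 p Lam y0 : ℝ} {phi Z Y : ℝ → ℝ} {b : ℝ → ℝ → ℝ}
    (hT : 0 ≤ T) (hlam0 : 0 < lam) (hlam1 : lam ≤ 1)
    (hphi : ∀ s ∈ Icc 0 T, ∀ t ∈ Icc 0 T, |phi t - phi s| ≤ K * |t - s| ^ lam)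
    (hbcont : ContinuousOn (fun q : ℝ × ℝ => b q.1 q.2) {q : ℝ × ℝ | q.1 ∈ Icc 0 T ∧ phi q.1 < q.2})
    (hblip : ∀ ε : ℝ, 0 < ε → ε < 1 → ∀ t1 ∈ Icc 0 T, ∀ t2 ∈ Icc 0 T, ∀ y1 y2 : ℝ,
      phi t1 + ε < y1 → phi t2 + ε < y2 →
      |b t1 y1 - b t2 y2| ≤ c1 / ε ^ p * (|y1 - y2| + |t1 - t2| ^ lam))
    (hc1 : 0 < c1) (hLam : 0 ≤ Lam)
    (hZ : ∀ s ∈ Icc 0 T, ∀ t ∈ Icc 0 T, |Z t - Z s| ≤ Lam * |t - s| ^ lam)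
    (hYc : ContinuousOn Y (Icc 0 T)) (hYphi : ∀ t ∈ Icc 0 T, phi t < Y t)
    (hY : ∀ t ∈ Icc 0 T, Y t = y0 + (∫ s in (0:ℝ)..t, b s (Y s)) + Z t) :
    ∃ L, 0 < L ∧ ∀ u ∈ Icc 0 T, ∀ v ∈ Icc 0 T, |b v (Y v) - b u (Y u)| ≤ L * |v - u| ^ lam := by
  obtain ⟨ε, hε, hε1, hYε⟩ : ∃ ε, 0 < ε ∧ ε < 1 ∧ ∀ t ∈ Icc 0 T, phi t + ε < Y t := by
    obtain ⟨δ, hδ, hδY⟩ := isCompact_Icc.exists_forall_le'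
      (hYc.sub (continuousOn_of_abs_sub_le_mul_rpow hlam0 hphi)) fun t ht => sub_pos.2 (hYphi t ht)
    refine ⟨min (δ / 2) (1 / 2), by positivity, by linarith [min_le_right (δ / 2) (1 / 2)],
      fun t ht => ?_⟩
    linarith [min_le_left (δ / 2) (1 / 2), hδY t ht, show (Y - phi) t = Y t - phi t from rfl]
  have hgc : ContinuousOn (fun s => b s (Y s)) (Icc 0 T) :=
    hbcont.comp (continuousOn_id.prodMk hYc) fun s hs => ⟨hs, hYphi s hs⟩
  obtain ⟨B, hB⟩ := isCompact_Icc.exists_bound_of_continuousOn hgc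
  set H := B * T ^ (1 - lam) + Lam
  have hH : 0 ≤ H := by
    have := (abs_nonneg _).trans (hB 0 (left_mem_Icc.2 hT))
    positivity
  have hYH : ∀ s ∈ Icc 0 T, ∀ t ∈ Icc 0 T, |Y t - Y s| ≤ H * |t - s| ^ lam :=
    fun s hs t ht => abs_sub_le_of_eq_integral_add hlam1 hB hZ
      (fun s hs t ht => sub_eq_integral_add_sub hgc hY hs ht) hs ht
  refine ⟨c1 / ε ^ p * (H + 1), by positivity, fun u hu v hv => ?_⟩
  calc |b v (Y v) - b u (Y u)| ≤ c1 / ε ^ p * (|Y v - Y u| + |v - u| ^ lam) :=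
        hblip ε hε hε1 v hv u hu _ _ (hYε v hv) (hYε u hu)
    _ ≤ c1 / ε ^ p * (H * |v - u| ^ lam + |v - u| ^ lam) := by gcongr; exact hYH u hu v hv
    _ = c1 / ε ^ p * (H + 1) * |v - u| ^ lam := by ring

lemma abs_sub_implicit_euler_increment_le {g Y Z : ℝ → ℝ} {T lam L y0 s t : ℝ}
    (hlam0 : 0 < lam) (hL : 0 ≤ L)
    (hg : ∀ u ∈ Icc 0 T, ∀ v ∈ Icc 0 T, |g v - g u| ≤ L * |v - u| ^ lam)
    (hY : ∀ t ∈ Icc 0 T, Y t = y0 + (∫ u in (0:ℝ)..t, g u) + Z t)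
    (hs : s ∈ Icc 0 T) (ht : t ∈ Icc 0 T) (hst : s ≤ t) :
    |Y t - Y s - g t * (t - s) - (Z t - Z s)| ≤ L * (t - s) ^ (1 + lam) := by
  have hgc := continuousOn_of_abs_sub_le_mul_rpow hlam0 hg
  have hsub : Icc s t ⊆ Icc 0 T := Icc_subset_Icc hs.1 ht.2
  calc |Y t - Y s - g t * (t - s) - (Z t - Z s)| = |(∫ u in s..t, g u) - g t * (t - s)| := by
        rw [sub_eq_integral_add_sub hgc hY hs ht]; ring_nf
    _ ≤ L * (t - s) ^ lam * (t - s) := by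
        refine abs_integral_sub_mul_le hst ((hgc.mono hsub).intervalIntegrable_of_Icc hst)
          fun u hu => (hg t ht u (hsub hu)).trans ?_
        gcongr
        rw [abs_sub_comm, abs_of_nonneg (sub_nonneg.2 hu.2)]; linarith [hu.1]
    _ = L * (t - s) ^ (1 + lam) := by
        rw [rpow_add' (sub_nonneg.2 hst) (by positivity), rpow_one]; ring

lemma abs_sub_implicit_euler_le {T lam L c x₀ : ℝ} {phi Y Z : ℝ → ℝ} {b : ℝ → ℝ → ℝ}
    {Yh : ℕ → ℝ} {N k : ℕ} (hT : 0 < T) (hL : 0 ≤ L) (hc : 0 ≤ c) (hN : 0 < N)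
    (hcN : c * (T / N) ≤ x₀) (hx₀ : x₀ < 1)
    (hloc : ∀ s ∈ Icc 0 T, ∀ t ∈ Icc 0 T, s ≤ t →
      |Y t - Y s - b t (Y t) * (t - s) - (Z t - Z s)| ≤ L * (t - s) ^ (1 + lam))
    (hosl : ∀ t ∈ Icc 0 T, ∀ y1 y2 : ℝ, phi t < y1 → phi t < y2 →
      (b t y1 - b t y2) * (y1 - y2) ≤ c * (y1 - y2) ^ 2)
    (hYphi : ∀ t ∈ Icc 0 T, phi t < Y t) (h0 : Y 0 = Yh 0)
    (hYh : ∀ k < N, phi (((k : ℝ) + 1) * T / N) < Yh (k + 1) ∧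
      Yh (k + 1) = Yh k + b (((k : ℝ) + 1) * T / N) (Yh (k + 1)) * (T / N)
        + (Z (((k : ℝ) + 1) * T / N) - Z ((k : ℝ) * T / N)))
    (hk : k ≤ N) :
    |Y ((k : ℝ) * T / N) - Yh k| ≤ L * T * exp (c * T / (1 - x₀)) * (T / N) ^ lam := by
  have hN' : (0 : ℝ) < N := Nat.cast_pos.2 hN
  have hD : 0 < T / N := div_pos hT hN'
  have hnode : ∀ j : ℕ, j ≤ N → (j : ℝ) * T / N ∈ Icc 0 T := fun j hj =>
    ⟨by positivity, div_le_of_le_mul₀ hN'.le hT.le (by rw [mul_comm]; gcongr)⟩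
  have hnode' : ∀ j < N, ((j : ℝ) + 1) * T / N ∈ Icc 0 T := fun j hj => by
    exact_mod_cast hnode (j + 1) hj
  have hstep : ∀ j : ℕ, ((j : ℝ) + 1) * T / N - j * T / N = T / N := fun j => by ring
  have herr := abs_sub_le_of_implicit_recursion (y := fun j => Y ((j : ℝ) * T / N)) (z := Yh)
    (f := fun j => b (((j : ℝ) + 1) * T / N))
    (w := fun j => Z (((j : ℝ) + 1) * T / N) - Z (j * T / N))
    (q := L * (T / N) ^ (1 + lam)) hc hD.le (hcN.trans_lt hx₀) (by simpa using h0)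
    (fun j hj => by
      push_cast
      exact hosl _ (hnode' j hj) _ _ (hYphi _ (hnode' j hj)) (hYh j hj).1)
    (fun j hj => by
      push_cast
      simpa only [hstep] using
        hloc _ (hnode j hj.le) _ (hnode' j hj) (by linarith [hstep j]))
    (fun j hj => (hYh j hj).2) k hk
  have hA : 1 ≤ (1 - c * (T / N))⁻¹ :=
    (one_le_inv₀ (sub_pos.2 (hcN.trans_lt hx₀))).2 (by nlinarith)
  calc |Y ((k : ℝ) * T / N) - Yh k|
      ≤ k * (L * (T / N) ^ (1 + lam)) * (1 - c * (T / N))⁻¹ ^ k := herr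
    _ ≤ N * (L * (T / N) ^ (1 + lam)) * (1 - c * (T / N))⁻¹ ^ N := by gcongr
    _ ≤ N * (L * (T / N) ^ (1 + lam)) * exp (N * (c * (T / N)) / (1 - x₀)) := by
        gcongr
        exact inv_one_sub_pow_le_exp N (by positivity) hcN hx₀
    _ = L * T * exp (c * T / (1 - x₀)) * (T / N) ^ lam := by
        rw [show (N : ℝ) * (c * (T / N)) = c * T by field_simp, rpow_add hD, rpow_one]
        field_simp

theorem stmt_15_general
    (T lam : ℝ) (hT : 0 < T) (hlam : lam ∈ Set.Ioo (0:ℝ) 1)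
    (phi : ℝ → ℝ) (K : ℝ)
    (hphiH : ∀ s ∈ Set.Icc (0:ℝ) T, ∀ t ∈ Set.Icc (0:ℝ) T, |phi t - phi s| ≤ K * |t - s| ^ lam)
    (b : ℝ → ℝ → ℝ) (c1 p : ℝ)
    (hc1 : 0 < c1)
    (hA2cont : ContinuousOn (fun q : ℝ × ℝ => b q.1 q.2)
      {q : ℝ × ℝ | q.1 ∈ Set.Icc (0:ℝ) T ∧ phi q.1 < q.2})
    (hA2lip : ∀ ε : ℝ, 0 < ε → ε < 1 →
      ∀ t1 ∈ Set.Icc (0:ℝ) T, ∀ t2 ∈ Set.Icc (0:ℝ) T, ∀ y1 y2 : ℝ,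
        phi t1 + ε < y1 → phi t2 + ε < y2 →
        |b t1 y1 - b t2 y2| ≤ c1 / ε ^ p * (|y1 - y2| + |t1 - t2| ^ lam))
    (Y0 : ℝ)
    (bp : ℝ → ℝ → ℝ) (c3 : ℝ) (hc3 : 0 < c3)
    (hA4deriv : ∀ t ∈ Set.Icc (0:ℝ) T, ∀ y : ℝ, phi t < y →
      HasDerivAt (fun x => b t x) (bp t y) y)
    (hA4lt : ∀ t ∈ Set.Icc (0:ℝ) T, ∀ y : ℝ, phi t < y → bp t y < c3)
    (Z : ℝ → ℝ) (Lam : ℝ) (hLam : 0 < Lam) (hZ0 : Z 0 = 0)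
    (hZH : ∀ s ∈ Set.Icc (0:ℝ) T, ∀ t ∈ Set.Icc (0:ℝ) T, |Z t - Z s| ≤ Lam * |t - s| ^ lam)
    (Y : ℝ → ℝ) (hYc : ContinuousOn Y (Set.Icc (0:ℝ) T))
    (hYsand : ∀ t ∈ Set.Icc (0:ℝ) T, phi t < Y t)
    (hYeq : ∀ t ∈ Set.Icc (0:ℝ) T, Y t = Y0 + (∫ s in (0:ℝ)..t, b s (Y s)) + Z t)
    (Yh : ℕ → ℕ → ℝ) (hYh0 : ∀ N : ℕ, Yh N 0 = Y0)
    (hYhrec : ∀ N : ℕ, 0 < N → c3 * (T / (N : ℝ)) < 1 → ∀ k : ℕ, k < N →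
      phi (((k : ℝ) + 1) * T / (N : ℝ)) < Yh N (k + 1) ∧
      Yh N (k + 1) = Yh N k + b (((k : ℝ) + 1) * T / (N : ℝ)) (Yh N (k + 1)) * (T / (N : ℝ))
        + (Z (((k : ℝ) + 1) * T / (N : ℝ)) - Z ((k : ℝ) * T / (N : ℝ))))
    :
    ∀ r : ℝ, 1 ≤ r → ∃ C : ℝ, 0 < C ∧
      ∀ N : ℕ, 0 < N → c3 * (T / (N : ℝ)) < 1 →
        ∀ k : ℕ, k ≤ N →
          |Y ((k : ℝ) * T / (N : ℝ)) - Yh N k| ^ r ≤ C * (T / (N : ℝ)) ^ (lam * r) := by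
  intro r hr
  obtain ⟨hlam0, hlam1⟩ := hlam
  obtain ⟨L, hL, hg⟩ := exists_pos_abs_drift_sub_le hT.le hlam0 hlam1.le hphiH hA2cont hA2lip
    hc1 hLam.le hZH hYc hYsand hYeq
  have hosl : ∀ t ∈ Icc 0 T, ∀ y1 y2 : ℝ, phi t < y1 → phi t < y2 →
      (b t y1 - b t y2) * (y1 - y2) ≤ c3 * (y1 - y2) ^ 2 := fun t ht _ _ h1 h2 =>
    sub_mul_sub_le_mul_sq_of_hasDerivAt (hA4deriv t ht) (fun y hy => (hA4lt t ht y hy).le) h1 h2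
  have hY0 : Y 0 = Y0 := by simpa [hZ0] using hYeq 0 (left_mem_Icc.2 hT.le)
  obtain ⟨x₀, hx₀, hx₀N⟩ := exists_lt_one_forall_div_le (mul_pos hc3 hT).le
  refine ⟨(L * T * exp (c3 * T / (1 - x₀))) ^ r, by positivity, fun N hN hNc k hk => ?_⟩
  have herr := abs_sub_implicit_euler_le hT hL.le hc3.le hN
    (by simpa only [mul_div_assoc] using hx₀N N (by rwa [mul_div_assoc])) hx₀
    (fun s hs t ht hst => abs_sub_implicit_euler_increment_le hlam0 hL.le hg hYeq hs ht hst)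
    hosl hYsand (hY0.trans (hYh0 N).symm) (hYhrec N hN hNc) hk
  calc |Y ((k : ℝ) * T / N) - Yh N k| ^ r
      ≤ (L * T * exp (c3 * T / (1 - x₀)) * (T / N) ^ lam) ^ r := by gcongr
    _ = (L * T * exp (c3 * T / (1 - x₀))) ^ r * (T / N) ^ (lam * r) := by
        rw [mul_rpow (by positivity) (by positivity), ← rpow_mul (by positivity)]

theorem stmt_15
    (T lam : ℝ) (hT : 0 < T) (hlam : lam ∈ Set.Ioo (0:ℝ) 1)
    (phi : ℝ → ℝ) (K : ℝ) (hK : 0 < K)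
    (hphiH : ∀ s ∈ Set.Icc (0:ℝ) T, ∀ t ∈ Set.Icc (0:ℝ) T, |phi t - phi s| ≤ K * |t - s| ^ lam)
    (b : ℝ → ℝ → ℝ) (c1 p c2 ystar gam : ℝ)
    (hc1 : 0 < c1) (hp : 1 < p) (hc2 : 0 < c2) (hystar : 0 < ystar)
    (hgam : 1 / lam - 1 < gam)
    (hA2cont : ContinuousOn (fun q : ℝ × ℝ => b q.1 q.2)
      {q : ℝ × ℝ | q.1 ∈ Set.Icc (0:ℝ) T ∧ phi q.1 < q.2})
    (hA2lip : ∀ ε : ℝ, 0 < ε → ε < 1 →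
      ∀ t1 ∈ Set.Icc (0:ℝ) T, ∀ t2 ∈ Set.Icc (0:ℝ) T, ∀ y1 y2 : ℝ,
        phi t1 + ε < y1 → phi t2 + ε < y2 →
        |b t1 y1 - b t2 y2| ≤ c1 / ε ^ p * (|y1 - y2| + |t1 - t2| ^ lam))
    (hA3 : ∀ t ∈ Set.Icc (0:ℝ) T, ∀ y : ℝ, phi t < y → y ≤ phi t + ystar →
      c2 / (y - phi t) ^ gam ≤ b t y)
    (Y0 : ℝ) (hA1 : phi 0 < Y0)
    (bp : ℝ → ℝ → ℝ) (c3 : ℝ) (hc3 : 0 < c3)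
    (hA4deriv : ∀ t ∈ Set.Icc (0:ℝ) T, ∀ y : ℝ, phi t < y →
      HasDerivAt (fun x => b t x) (bp t y) y)
    (hA4cont : ContinuousOn (fun q : ℝ × ℝ => bp q.1 q.2)
      {q : ℝ × ℝ | q.1 ∈ Set.Icc (0:ℝ) T ∧ phi q.1 < q.2})
    (hA4lt : ∀ t ∈ Set.Icc (0:ℝ) T, ∀ y : ℝ, phi t < y → bp t y < c3)
    (Z : ℝ → ℝ) (Lam : ℝ) (hLam : 0 < Lam) (hZ0 : Z 0 = 0)
    (hZH : ∀ s ∈ Set.Icc (0:ℝ) T, ∀ t ∈ Set.Icc (0:ℝ) T, |Z t - Z s| ≤ Lam * |t - s| ^ lam)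
    (Y : ℝ → ℝ) (hYc : ContinuousOn Y (Set.Icc (0:ℝ) T))
    (hYsand : ∀ t ∈ Set.Icc (0:ℝ) T, phi t < Y t)
    (hYeq : ∀ t ∈ Set.Icc (0:ℝ) T, Y t = Y0 + (∫ s in (0:ℝ)..t, b s (Y s)) + Z t)
    (Yh : ℕ → ℕ → ℝ) (hYh0 : ∀ N : ℕ, Yh N 0 = Y0)
    (hYhrec : ∀ N : ℕ, 0 < N → c3 * (T / (N : ℝ)) < 1 → ∀ k : ℕ, k < N →
      phi (((k : ℝ) + 1) * T / (N : ℝ)) < Yh N (k + 1) ∧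
      Yh N (k + 1) = Yh N k + b (((k : ℝ) + 1) * T / (N : ℝ)) (Yh N (k + 1)) * (T / (N : ℝ))
        + (Z (((k : ℝ) + 1) * T / (N : ℝ)) - Z ((k : ℝ) * T / (N : ℝ))))
    :
    ∀ r : ℝ, 1 ≤ r → ∃ C : ℝ, 0 < C ∧
      ∀ N : ℕ, 0 < N → c3 * (T / (N : ℝ)) < 1 →
        ∀ k : ℕ, k ≤ N →
          |Y ((k : ℝ) * T / (N : ℝ)) - Yh N k| ^ r ≤ C * (T / (N : ℝ)) ^ (lam * r) :=
  stmt_15_general T lam hT hlam phi K hphiH b c1 p hc1 hA2cont hA2lip Y0 bp c3 hc3 hA4deriv hA4lt Z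
    Lam hLam hZ0 hZH Y hYc hYsand hYeq Yh hYh0 hYhrec
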